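/- Let s be a proper scoring rule on 𝒫 and let H = { p ∈ 𝒫̂ : s(p) is finite }. Then: (1) for every p in the closure of H (in the topology of pointwise convergence), the limit of ⟨q, s(q)⟩ as q tends to p within H exists in [-∞, M]; (2) if moreover s(p) is finite, this limit equals ⟨p, s(p)⟩; and (3) if (p_n) is a sequence in H converging to p in the closure of H with lim_n s(p_n) = r in [-∞, M]^Ω, then ⟨p, r⟩ = lim_n ⟨p_n, s(p_n)⟩. -/

import Mathlib

open Filter Topology

variable {Ω : Type*}

/-- A probability function: nonnegative, finitely additive, total mass one. -/
def IsProbability [Fintype Ω] (p : Set Ω → ℝ) : Prop :=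
  (∀ A, 0 ≤ p A) ∧ (∀ A B : Set Ω, Disjoint A B → p (A ∪ B) = p A + p B) ∧ p Set.univ = 1

/-- Expected value `E_p f = Σ_{ω, p({ω}) ≠ 0} p({ω}) f(ω)`.  Since `EReal`
multiplication satisfies `0 * a = a * 0 = 0` even for infinite `a`, the zero terms
contribute nothing and we may sum over all of `Ω`. -/
noncomputable def expScore [Fintype Ω] (p : Set Ω → ℝ) (f : Ω → EReal) : EReal :=
  ∑ ω, (p {ω} : EReal) * f ω

/-- A score is finite when all of its values are finite. -/
def FiniteScore (f : Ω → EReal) : Prop := ∀ ω, f ω ≠ ⊥ ∧ f ω ≠ ⊤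

/-- The extended scalar product `⟨f,g⟩ = Σ_ω f(ω)·g(ω)`, where `EReal`
multiplication satisfies the stipulation `a·0 = 0·a = 0` for all `a`. -/
noncomputable def eip [Fintype Ω] (f : Ω → ℝ) (g : Ω → EReal) : EReal :=
  ∑ ω, (f ω : EReal) * g ω

/-- Membership in `𝒫̂`: a nonnegative vector on `Ω` summing to `1`. -/
def IsSimplex [Fintype Ω] (v : Ω → ℝ) : Prop :=
  (∀ ω, 0 ≤ v ω) ∧ ∑ ω, v ω = 1

/-- The probability function `p` with `p̂ = v`. -/
noncomputable def toProb [Fintype Ω] (v : Ω → ℝ) : Set Ω → ℝ :=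
  fun A => ∑ ω, Set.indicator A v ω


namespace Stmt7Aux
lemma toProb_singleton [Fintype Ω] (v : Ω → ℝ) (ω : Ω) : toProb v {ω} = v ω := by
  unfold toProb
  rw [Finset.sum_eq_single ω]
  · simp
  · intro b _ hb
    exact Set.indicator_of_notMem (by simpa using hb) v
  · intro h; exact absurd (Finset.mem_univ ω) h

lemma isProb_toProb [Fintype Ω] {v : Ω → ℝ} (hv : IsSimplex v) : IsProbability (toProb v) := by
  refine ⟨fun A => Finset.sum_nonneg fun ω _ => Set.indicator_nonneg (fun x _ => hv.1 x) _,
    fun A B hAB => ?_, ?_⟩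
  · unfold toProb
    rw [← Finset.sum_add_distrib]
    exact Finset.sum_congr rfl fun ω _ => by rw [Set.indicator_union_of_disjoint hAB]
  · unfold toProb
    simpa using hv.2

lemma expScore_toProb [Fintype Ω] (v : Ω → ℝ) (f : Ω → EReal) :
    expScore (toProb v) f = eip v f :=
  Finset.sum_congr rfl fun ω _ => by rw [toProb_singleton]

lemma coe_sum {ι : Type*} (s : Finset ι) (f : ι → ℝ) :
    ((∑ i ∈ s, f i : ℝ) : EReal) = ∑ i ∈ s, (f i : EReal) := by
  induction s using Finset.cons_induction with
  | empty => simp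
  | cons a s ha ih => rw [Finset.sum_cons, Finset.sum_cons, EReal.coe_add, ih]

lemma sum_bot {ι : Type*} [DecidableEq ι] (s : Finset ι) (g : ι → EReal) {i : ι} (hi : i ∈ s) (h : g i = ⊥) :
    ∑ j ∈ s, g j = ⊥ := by
  rw [← Finset.add_sum_erase _ _ hi, h, EReal.bot_add]

lemma sub_nonneg' {M : ℝ} {x : EReal} (hx : x ≤ (M : EReal)) : 0 ≤ (M : EReal) - x := by
  induction x using EReal.rec with
  | bot => rw [EReal.coe_sub_bot]; exact le_top
  | coe y =>
      rw [← EReal.coe_sub]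
      exact_mod_cast sub_nonneg.2 (by exact_mod_cast hx)
  | top => exact absurd hx (by simp)

lemma lemE [Fintype Ω] [DecidableEq Ω] {M : ℝ} {v : Ω → ℝ} {f : Ω → EReal} (hv0 : ∀ ω, 0 ≤ v ω)
    (hv1 : ∑ ω, v ω = 1) (hf : ∀ ω, f ω ≤ (M : EReal)) :
    ∑ ω, (v ω : EReal) * f ω = ↑M + -(∑ ω, (v ω : EReal) * ((M : EReal) - f ω)) := by
  by_cases hA : ∃ ω, 0 < v ω ∧ f ω = ⊥
  · obtain ⟨ω₀, hv, hb⟩ := hA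
    have hL : ∑ ω, (v ω : EReal) * f ω = ⊥ :=
      sum_bot (ι := Ω) _ _ (Finset.mem_univ ω₀) (by rw [hb]; exact EReal.coe_mul_bot_of_pos hv)
    have hterm : (v ω₀ : EReal) * ((M : EReal) - f ω₀) = ⊤ := by
      rw [hb, EReal.coe_sub_bot]
      exact EReal.coe_mul_top_of_pos hv
    have hR : ∑ ω, (v ω : EReal) * ((M : EReal) - f ω) = ⊤ := by
      refine top_le_iff.mp ?_
      rw [← hterm]
      exact Finset.single_le_sum (f := fun ω => (v ω : EReal) * ((M : EReal) - f ω))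
        (fun ω _ => mul_nonneg (EReal.coe_nonneg.2 (hv0 ω)) (sub_nonneg' (hf ω)))
        (Finset.mem_univ ω₀)
    rw [hL, hR]
    simp
  · push_neg at hA
    have key : ∀ ω, (v ω : EReal) * f ω = ((v ω * (f ω).toReal : ℝ) : EReal) ∧
        (v ω : EReal) * ((M : EReal) - f ω) = ((v ω * (M - (f ω).toReal) : ℝ) : EReal) := by
      intro ω
      rcases eq_or_lt_of_le (hv0 ω) with h0 | hpos
      · constructor <;> simp [← h0]
      · have hnb : f ω ≠ ⊥ := hA ω hpos
        have hnt : f ω ≠ ⊤ := (lt_of_le_of_lt (hf ω) (EReal.coe_lt_top M)).ne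
        constructor
        · conv_lhs => rw [← EReal.coe_toReal hnt hnb]
          rw [← EReal.coe_mul]
        · have hsub : (M : EReal) - f ω = ((M - (f ω).toReal : ℝ) : EReal) := by
            conv_lhs => rw [← EReal.coe_toReal hnt hnb]
            rw [← EReal.coe_sub]
          rw [hsub, ← EReal.coe_mul]
    have hL : ∑ ω, (v ω : EReal) * f ω = ((∑ ω, v ω * (f ω).toReal : ℝ) : EReal) := by
      rw [coe_sum]; exact Finset.sum_congr rfl fun ω _ => (key ω).1
    have hR : ∑ ω, (v ω : EReal) * ((M : EReal) - f ω)
        = ((∑ ω, v ω * (M - (f ω).toReal) : ℝ) : EReal) := by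
      rw [coe_sum]; exact Finset.sum_congr rfl fun ω _ => (key ω).2
    rw [hL, hR, ← EReal.coe_neg, ← EReal.coe_add]
    norm_cast
    have : ∑ ω, v ω * (M - (f ω).toReal) = M - ∑ ω, v ω * (f ω).toReal := by
      simp only [mul_sub]
      rw [Finset.sum_sub_distrib, ← Finset.sum_mul, hv1, one_mul]
    rw [this]; ring


lemma tendsto_M_sub {α : Type*} {l : Filter α} (M : ℝ) {u : α → EReal} {c : EReal}
    (h : Tendsto u l (𝓝 c)) :
    Tendsto (fun a => (M : EReal) + -(u a)) l (𝓝 ((M : EReal) + -c)) := by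
  have hneg : Tendsto (fun a => -(u a)) l (𝓝 (-c)) := h.neg
  have hadd : ContinuousAt (fun x : EReal => (M : EReal) + x) (-c) := by
    have h1 := EReal.continuousAt_add (p := ((M : EReal), -c))
      (Or.inl (EReal.coe_ne_top M)) (Or.inl (EReal.coe_ne_bot M))
    exact h1.comp (Continuous.continuousAt (continuous_const.prodMk continuous_id))
  exact hadd.tendsto.comp hneg

end Stmt7Aux

open Stmt7Aux
theorem stmt7 [Fintype Ω] [Nonempty Ω] (M : ℝ)
    (s : (Set Ω → ℝ) → Ω → EReal)
    (hbound : ∀ p, IsProbability p → ∀ ω, s p ω ≤ (M : EReal))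
    (hproper : ∀ p q, IsProbability p → IsProbability q →
      expScore p (s q) ≤ expScore p (s p))
    (H : Set (Ω → ℝ))
    (hH : H = {v | IsSimplex v ∧ FiniteScore (s (toProb v))}) :
    -- (1) the limit of ⟨q, s(q)⟩ as q → p within H exists in [-∞, M]
    (∀ p ∈ closure H, ∃ L : EReal, L ≤ (M : EReal) ∧
        Tendsto (fun q => eip q (s (toProb q))) (𝓝[H] p) (𝓝 L)) ∧
    -- (2) if s(p) is finite, the limit equals ⟨p, s(p)⟩
    (∀ p ∈ closure H, FiniteScore (s (toProb p)) →
        Tendsto (fun q => eip q (s (toProb q))) (𝓝[H] p)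
          (𝓝 (eip p (s (toProb p))))) ∧
    -- (3) if pₙ ∈ H, pₙ → p ∈ closure H and s(pₙ) → r, then ⟨p, r⟩ = lim ⟨pₙ, s(pₙ)⟩
    (∀ (pn : ℕ → Ω → ℝ) (p : Ω → ℝ) (r : Ω → EReal),
        (∀ n, pn n ∈ H) → p ∈ closure H → Tendsto pn atTop (𝓝 p) →
        Tendsto (fun n => s (toProb (pn n))) atTop (𝓝 r) →
        Tendsto (fun n => eip (pn n) (s (toProb (pn n)))) atTop
          (𝓝 (eip p r))) := by
  haveI : DecidableEq Ω := Classical.decEq Ω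
  classical
  set sr : (Ω → ℝ) → Ω → ℝ := fun q ω => (s (toProb q) ω).toReal with hsr
  set t : (Ω → ℝ) → Ω → ℝ := fun q ω => M - sr q ω with ht
  set T : (Ω → ℝ) → ℝ := fun q => ∑ ω, q ω * t q ω with hT
  have hHmem : ∀ q ∈ H, IsSimplex q ∧ FiniteScore (s (toProb q)) := by
    intro q hq; rw [hH] at hq; exact ⟨hq.1, hq.2⟩
  have hsimplexClosed : IsClosed {v : Ω → ℝ | IsSimplex v} := by
    have heq : {v : Ω → ℝ | IsSimplex v}
        = (⋂ ω, {v : Ω → ℝ | 0 ≤ v ω}) ∩ {v : Ω → ℝ | ∑ ω, v ω = 1} := by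
      ext v; simp [IsSimplex, Set.mem_iInter]
    rw [heq]
    exact IsClosed.inter
      (isClosed_iInter fun ω => isClosed_le continuous_const (continuous_apply ω))
      (isClosed_eq (continuous_finset_sum _ fun ω _ => continuous_apply ω) continuous_const)
  have hclosSimplex : ∀ p ∈ closure H, IsSimplex p := fun p hp =>
    closure_minimal (fun q hq => (hHmem q hq).1) hsimplexClosed hp
  have hSle : ∀ v, IsSimplex v → ∀ ω, s (toProb v) ω ≤ (M : EReal) :=
    fun v hv => hbound _ (isProb_toProb hv)
  have ht0 : ∀ q ∈ H, ∀ ω, 0 ≤ t q ω := by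
    intro q hq ω
    obtain ⟨hqs, hqf⟩ := hHmem q hq
    have h1 := EReal.toReal_le_toReal (hSle q hqs ω) (hqf ω).1 (EReal.coe_ne_top M)
    rw [EReal.toReal_coe] at h1
    simpa [ht, hsr] using sub_nonneg.2 h1
  have hT0 : ∀ q ∈ H, 0 ≤ T q := fun q hq =>
    Finset.sum_nonneg fun ω _ => mul_nonneg ((hHmem q hq).1.1 ω) (ht0 q hq ω)
  have hpair : ∀ (v : Ω → ℝ) (q : Ω → ℝ), q ∈ H →
      eip v (s (toProb q)) = ((∑ ω, v ω * sr q ω : ℝ) : EReal) := by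
    intro v q hq
    obtain ⟨hqs, hqf⟩ := hHmem q hq
    rw [coe_sum]
    refine Finset.sum_congr rfl fun ω _ => ?_
    conv_lhs => rw [← EReal.coe_toReal (hqf ω).2 (hqf ω).1]
    rw [← EReal.coe_mul]
  have hsumt : ∀ (v q : Ω → ℝ), (∑ ω, v ω = 1) →
      ∑ ω, v ω * t q ω = M - ∑ ω, v ω * sr q ω := by
    intro v q hv1
    simp only [ht, mul_sub]
    rw [Finset.sum_sub_distrib, ← Finset.sum_mul, hv1, one_mul]
  have hGT : ∀ q ∈ H, eip q (s (toProb q)) = (M : EReal) + -((T q : ℝ) : EReal) := by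
    intro q hq
    obtain ⟨hqs, hqf⟩ := hHmem q hq
    have hTq : T q = M - ∑ ω, q ω * sr q ω := hsumt q q hqs.2
    rw [hpair q q hq, hTq, ← EReal.coe_neg, ← EReal.coe_add]
    norm_cast
    ring
  have hkey2 : ∀ q q', q ∈ H → q' ∈ H → T q ≤ ∑ ω, q ω * t q' ω := by
    intro q q' hq hq'
    have h1 := hproper (toProb q) (toProb q') (isProb_toProb (hHmem q hq).1)
      (isProb_toProb (hHmem q' hq').1)
    rw [expScore_toProb, expScore_toProb, hpair q q' hq', hpair q q hq] at h1
    have h2 : ∑ ω, q ω * sr q' ω ≤ ∑ ω, q ω * sr q ω := by exact_mod_cast h1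
    have hq1 := (hHmem q hq).1.2
    have hTq : T q = M - ∑ ω, q ω * sr q ω := hsumt q q hq1
    rw [hTq, hsumt q q' hq1]
    linarith
  have hKL : ∀ (ζ : ℝ) (v q' : Ω → ℝ), 0 ≤ ζ → q' ∈ H → (∀ ω, ζ * v ω ≤ q' ω) →
      ζ * (∑ ω, v ω * t q' ω) ≤ T q' := by
    intro ζ v q' hζ hq' hdom
    rw [Finset.mul_sum]
    refine Finset.sum_le_sum fun ω _ => ?_
    rw [← mul_assoc]
    exact mul_le_mul_of_nonneg_right (hdom ω) (ht0 q' hq' ω)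
  have hcont : ∀ (w : Ω → ℝ) (x : Ω → ℝ), Tendsto (fun v : Ω → ℝ => ∑ ω, v ω * w ω)
      (𝓝 x) (𝓝 (∑ ω, x ω * w ω)) := fun w x =>
    ((continuous_finset_sum _ fun ω _ => (continuous_apply ω).mul continuous_const).tendsto x)
  -- F : the EReal-valued T
  set F : (Ω → ℝ) → EReal := fun q => ((T q : ℝ) : EReal) with hF
  -- eventual domination lemma
  have hdomin : ∀ (p : Ω → ℝ), p ∈ closure H → ∀ ζ : ℝ, ζ < 1 →
      ∀ᶠ q in 𝓝[H] p, ∀ ω, ζ * p ω ≤ q ω := by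
    intro p hp ζ hζ
    rw [eventually_all]
    intro ω
    rcases eq_or_lt_of_le ((hclosSimplex p hp).1 ω) with h0 | hpos
    · filter_upwards [eventually_mem_nhdsWithin] with q hq
      rw [← h0, mul_zero]
      exact (hHmem q hq).1.1 ω
    · have htd : Tendsto (fun q : Ω → ℝ => q ω) (𝓝[H] p) (𝓝 (p ω)) :=
        ((continuous_apply ω).continuousAt).mono_left nhdsWithin_le_nhds
      have hlt : ζ * p ω < p ω := by nlinarith
      filter_upwards [htd.eventually (eventually_gt_nhds hlt)] with q hq using le_of_lt hq
  -- core limit lemma for parts 1 and 2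
  have hcore : ∀ p ∈ closure H,
      limsup F (𝓝[H] p) ≤ liminf F (𝓝[H] p) := by
    intro p hp
    haveI hne : (𝓝[H] p).NeBot := mem_closure_iff_nhdsWithin_neBot.mp hp
    have hevH : ∀ᶠ q in 𝓝[H] p, q ∈ H := eventually_mem_nhdsWithin
    have hc0 : (0 : EReal) ≤ liminf F (𝓝[H] p) := by
      refine Filter.le_liminf_of_le ?_ ?_
      · isBoundedDefault
      · filter_upwards [hevH] with q hq
        exact EReal.coe_nonneg.2 (hT0 q hq)
    by_cases hctop : liminf F (𝓝[H] p) = ⊤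
    · rw [hctop]; exact le_top
    set c := liminf F (𝓝[H] p) with hc
    have hcbot : c ≠ ⊥ := ne_of_gt (lt_of_lt_of_le (by simp) hc0)
    set cr := c.toReal with hcr
    have hccr : c = (cr : EReal) := (EReal.coe_toReal hctop hcbot).symm
    have hcr0 : 0 ≤ cr := by
      rw [hccr] at hc0; exact_mod_cast hc0
    by_contra hlt
    obtain ⟨b, hcb, hbl⟩ := EReal.exists_between_coe_real (not_le.mp hlt)
    have hcrb : cr < b := by rw [hccr] at hcb; exact_mod_cast hcb
    set ε := (b - cr) / 3 with hε
    have hεpos : 0 < ε := by rw [hε]; linarith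
    set ζ := (cr + ε) / (cr + 2 * ε) with hζ
    have hζpos : 0 < ζ := div_pos (by linarith) (by linarith)
    have hζlt : ζ < 1 := by
      rw [hζ, div_lt_one (by linarith)]; linarith
    -- find q' close to p with small T
    have hfreq : ∃ᶠ q in 𝓝[H] p, F q < ((cr + ε : ℝ) : EReal) := by
      refine Filter.frequently_lt_of_liminf_lt ?_ ?_
      · isBoundedDefault
      · rw [← hc, hccr]; exact_mod_cast (by linarith : cr < cr + ε)
    have hev : ∀ᶠ q in 𝓝[H] p, q ∈ H ∧ ∀ ω, ζ * p ω ≤ q ω :=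
      hevH.and (hdomin p hp ζ hζlt)
    obtain ⟨q', hq'T, hq'H, hq'dom⟩ := (hfreq.and_eventually hev).exists
    have hq'Tr : T q' < cr + ε := by
      simp only [hF] at hq'T
      exact_mod_cast hq'T
    -- ⟨p, t q'⟩ ≤ cr + 2ε
    have hptq' : ∑ ω, p ω * t q' ω ≤ cr + 2 * ε := by
      have h1 := hKL ζ p q' (le_of_lt hζpos) hq'H hq'dom
      have h2 : ζ * (∑ ω, p ω * t q' ω) < cr + ε := lt_of_le_of_lt h1 hq'Tr
      have h3 : cr + ε = ζ * (cr + 2 * ε) := by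
        rw [hζ]; field_simp
      nlinarith [h2, h3, hζpos]
    -- eventually F q ≤ b
    have hevb : ∀ᶠ q in 𝓝[H] p, F q ≤ (b : EReal) := by
      have htd : Tendsto (fun q : Ω → ℝ => ∑ ω, q ω * t q' ω) (𝓝[H] p)
          (𝓝 (∑ ω, p ω * t q' ω)) := (hcont (t q') p).mono_left nhdsWithin_le_nhds
      have hlim_lt : ∑ ω, p ω * t q' ω < b := lt_of_le_of_lt hptq' (by rw [hε]; linarith)
      filter_upwards [hevH, htd.eventually (eventually_lt_nhds hlim_lt)] with q hq hqb
      have h5 := le_trans (hkey2 q q' hq hq'H) (le_of_lt hqb)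
      simp only [hF]
      exact_mod_cast h5
    have : limsup F (𝓝[H] p) ≤ (b : EReal) := Filter.limsup_le_of_le (by isBoundedDefault) hevb
    exact absurd this (not_le.2 hbl)
  have htendF : ∀ p ∈ closure H,
      Tendsto F (𝓝[H] p) (𝓝 (liminf F (𝓝[H] p))) := by
    intro p hp
    haveI hne : (𝓝[H] p).NeBot := mem_closure_iff_nhdsWithin_neBot.mp hp
    refine tendsto_of_liminf_eq_limsup rfl ?_ ?_ ?_
    · exact le_antisymm (hcore p hp) (Filter.liminf_le_limsup)
    · isBoundedDefault
    · isBoundedDefault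
  have hc0' : ∀ p ∈ closure H, (0 : EReal) ≤ liminf F (𝓝[H] p) := by
    intro p hp
    haveI hne : (𝓝[H] p).NeBot := mem_closure_iff_nhdsWithin_neBot.mp hp
    refine Filter.le_liminf_of_le ?_ ?_
    · isBoundedDefault
    · filter_upwards [eventually_mem_nhdsWithin] with q hq
      exact EReal.coe_nonneg.2 (hT0 q hq)
  have htendG : ∀ p ∈ closure H,
      Tendsto (fun q => eip q (s (toProb q))) (𝓝[H] p)
        (𝓝 ((M : EReal) + -(liminf F (𝓝[H] p)))) := by
    intro p hp
    refine (tendsto_M_sub M (htendF p hp)).congr' ?_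
    filter_upwards [eventually_mem_nhdsWithin] with q hq
    exact (hGT q hq).symm
  refine ⟨?_, ?_, ?_⟩
  · -- part (1)
    intro p hp
    refine ⟨(M : EReal) + -(liminf F (𝓝[H] p)), ?_, htendG p hp⟩
    have h1 : -(liminf F (𝓝[H] p)) ≤ 0 := by
      rw [show (0 : EReal) = -0 from (neg_zero).symm]
      exact EReal.neg_le_neg_iff.2 (hc0' p hp)
    calc (M : EReal) + -(liminf F (𝓝[H] p)) ≤ (M : EReal) + 0 := by
          exact add_le_add_right h1 _
      _ = (M : EReal) := by simp
  · -- part (2)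
    intro p hp hfs
    have hpH : p ∈ H := by rw [hH]; exact ⟨hclosSimplex p hp, hfs⟩
    haveI hne : (𝓝[H] p).NeBot := mem_closure_iff_nhdsWithin_neBot.mp hp
    have hevH : ∀ᶠ q in 𝓝[H] p, q ∈ H := eventually_mem_nhdsWithin
    -- limsup ≤ T p
    have hup : limsup F (𝓝[H] p) ≤ ((T p : ℝ) : EReal) := by
      have htd : Tendsto (fun q : Ω → ℝ => ((∑ ω, q ω * t p ω : ℝ) : EReal)) (𝓝[H] p)
          (𝓝 ((T p : ℝ) : EReal)) := by
        have : Tendsto (fun q : Ω → ℝ => ∑ ω, q ω * t p ω) (𝓝[H] p)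
            (𝓝 (∑ ω, p ω * t p ω)) := (hcont (t p) p).mono_left nhdsWithin_le_nhds
        exact EReal.tendsto_coe.2 this
      calc limsup F (𝓝[H] p)
          ≤ limsup (fun q : Ω → ℝ => ((∑ ω, q ω * t p ω : ℝ) : EReal)) (𝓝[H] p) := by
            refine Filter.limsup_le_limsup ?_ ?_ ?_
            · filter_upwards [hevH] with q hq
              exact EReal.coe_le_coe_iff.2 (hkey2 q p hq hpH)
            · isBoundedDefault
            · isBoundedDefault
        _ = ((T p : ℝ) : EReal) := htd.limsup_eq
    -- liminf ≥ T p
    have hdown : ((T p : ℝ) : EReal) ≤ liminf F (𝓝[H] p) := by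
      have hstep : ∀ ζ : ℝ, 0 < ζ → ζ < 1 →
          ((ζ * T p : ℝ) : EReal) ≤ liminf F (𝓝[H] p) := by
        intro ζ h0 h1
        refine Filter.le_liminf_of_le ?_ ?_
        · isBoundedDefault
        · filter_upwards [hevH, hdomin p hp ζ h1] with q hq hqdom
          refine EReal.coe_le_coe_iff.2 ?_
          have h2 : T p ≤ ∑ ω, p ω * t q ω := hkey2 p q hpH hq
          have h3 : ζ * (∑ ω, p ω * t q ω) ≤ T q := hKL ζ p q (le_of_lt h0) hq hqdom
          nlinarith
      by_contra hlt
      obtain ⟨b, hbl, hbt⟩ := EReal.exists_between_coe_real (not_le.mp hlt)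
      have hbr : b < T p := by exact_mod_cast hbt
      have hb0 : 0 < b := by
        rcases lt_or_ge 0 b with h | h
        · exact h
        · exfalso
          have := lt_of_le_of_lt (le_trans (EReal.coe_le_coe_iff.2 h : (b:EReal) ≤ (0:ℝ))
            (by simpa using hc0' p hp)) hbl
          exact lt_irrefl _ this
      have hTp0 : 0 < T p := lt_trans hb0 hbr
      have hζ1 : b / T p < 1 := (div_lt_one hTp0).2 hbr
      have hζ0 : 0 < b / T p := div_pos hb0 hTp0
      have := hstep (b / T p) hζ0 hζ1
      rw [div_mul_cancel₀ b (ne_of_gt hTp0)] at this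
      exact absurd (lt_of_le_of_lt this hbl) (lt_irrefl _)
    have heq : liminf F (𝓝[H] p) = ((T p : ℝ) : EReal) :=
      le_antisymm (le_trans (Filter.liminf_le_limsup) hup) hdown
    have := htendG p hp
    rw [heq] at this
    rwa [← hGT p hpH] at this
  · -- part (3)
    intro pn p r hpnH hp hpnp hrt
    have hps := hclosSimplex p hp
    have hrpt : ∀ ω, Tendsto (fun n => s (toProb (pn n)) ω) atTop (𝓝 (r ω)) :=
      fun ω => tendsto_pi_nhds.1 hrt ω
    have hrle : ∀ ω, r ω ≤ (M : EReal) := fun ω =>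
      le_of_tendsto (hrpt ω)
        (Eventually.of_forall fun n => hSle (pn n) (hHmem _ (hpnH n)).1 ω)
    have hρ0 : ∀ ω, (0 : EReal) ≤ (M : EReal) - r ω := fun ω => sub_nonneg' (hrle ω)
    have hρbot : ∀ ω, (M : EReal) - r ω ≠ ⊥ := fun ω h => by
      have := hρ0 ω; rw [h] at this; exact absurd this (by simp)
    have hpnω : ∀ ω, Tendsto (fun n => pn n ω) atTop (𝓝 (p ω)) :=
      fun ω => tendsto_pi_nhds.1 hpnp ω
    have htcoe : ∀ n ω, ((t (pn n) ω : ℝ) : EReal) = (M : EReal) + -(s (toProb (pn n)) ω) := by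
      intro n ω
      have hf := (hHmem _ (hpnH n)).2 ω
      rw [show t (pn n) ω = M - sr (pn n) ω from rfl, EReal.coe_sub, sub_eq_add_neg]
      rw [EReal.coe_toReal hf.2 hf.1]
    have htn : ∀ ω, Tendsto (fun n => ((t (pn n) ω : ℝ) : EReal)) atTop
        (𝓝 ((M : EReal) - r ω)) := by
      intro ω
      have h2 := tendsto_M_sub M (hrpt ω)
      rw [← sub_eq_add_neg] at h2
      exact (h2.congr fun n => (htcoe n ω).symm)
    by_cases hA : ∃ ω, 0 < p ω ∧ (M : EReal) - r ω = ⊤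
    · -- some infinite contribution : everything tends to ⊥
      obtain ⟨ω₀, hω₀p, hω₀⟩ := hA
      have hsum : ∑ ω, (p ω : EReal) * ((M : EReal) - r ω) = ⊤ := by
        refine top_le_iff.mp ?_
        have hterm : (p ω₀ : EReal) * ((M : EReal) - r ω₀) = ⊤ := by
          rw [hω₀]; exact EReal.coe_mul_top_of_pos hω₀p
        rw [← hterm]
        exact Finset.single_le_sum (f := fun ω => (p ω : EReal) * ((M : EReal) - r ω))
          (fun ω _ => mul_nonneg (EReal.coe_nonneg.2 (hps.1 ω)) (hρ0 ω))
          (Finset.mem_univ ω₀)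
      have heip : eip p r = (M : EReal) + -(⊤ : EReal) := by
        rw [show eip p r = ∑ ω, (p ω : EReal) * r ω from rfl,
          Stmt7Aux.lemE hps.1 hps.2 hrle, hsum]
      have hTtop : Tendsto (fun n => ((T (pn n) : ℝ) : EReal)) atTop (𝓝 ⊤) := by
        have hpair' : Tendsto
            (fun n => (((pn n ω₀ : ℝ) : EReal), ((t (pn n) ω₀ : ℝ) : EReal))) atTop
            (𝓝 (((p ω₀ : ℝ) : EReal), (⊤ : EReal))) :=
          (EReal.tendsto_coe.2 (hpnω ω₀)).prodMk_nhds (hω₀ ▸ htn ω₀)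
        have hmul : ContinuousAt (fun q : EReal × EReal => q.1 * q.2)
            (((p ω₀ : ℝ) : EReal), (⊤ : EReal)) :=
          EReal.continuousAt_mul (Or.inr (by simp))
            (Or.inl (show ((p ω₀ : ℝ) : EReal) ≠ 0 by exact_mod_cast ne_of_gt hω₀p))
            (Or.inl (EReal.coe_ne_bot _)) (Or.inl (EReal.coe_ne_top _))
        have hprod := (hmul.tendsto).comp hpair'
        rw [show ((p ω₀ : ℝ) : EReal) * ⊤ = ⊤ from EReal.coe_mul_top_of_pos hω₀p] at hprod
        refine tendsto_nhds_top_mono hprod ?_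
        refine Eventually.of_forall fun n => ?_
        show ((pn n ω₀ : ℝ) : EReal) * ((t (pn n) ω₀ : ℝ) : EReal) ≤ ((T (pn n) : ℝ) : EReal)
        rw [← EReal.coe_mul]
        refine EReal.coe_le_coe_iff.2 ?_
        exact Finset.single_le_sum (f := fun ω => pn n ω * t (pn n) ω)
          (fun ω _ => mul_nonneg ((hHmem _ (hpnH n)).1.1 ω) (ht0 _ (hpnH n) ω))
          (Finset.mem_univ ω₀)
      rw [heip]
      exact (tendsto_M_sub M hTtop).congr fun n => (hGT _ (hpnH n)).symm
    · push_neg at hA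
      have hρtop : ∀ ω, 0 < p ω → (M : EReal) - r ω ≠ ⊤ := hA
      set ρr : Ω → ℝ := fun ω => ((M : EReal) - r ω).toReal with hρr
      set Pr : ℝ := ∑ ω, p ω * ρr ω with hPr
      have hterm : ∀ ω, (p ω : EReal) * ((M : EReal) - r ω) = ((p ω * ρr ω : ℝ) : EReal) := by
        intro ω
        rcases eq_or_lt_of_le (hps.1 ω) with h0 | hpos
        · rw [← h0]; simp
        · rw [show (M : EReal) - r ω = ((ρr ω : ℝ) : EReal) from
            (EReal.coe_toReal (hρtop ω hpos) (hρbot ω)).symm, ← EReal.coe_mul]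
      have hPsum : ∑ ω, (p ω : EReal) * ((M : EReal) - r ω) = ((Pr : ℝ) : EReal) := by
        rw [hPr, coe_sum]
        exact Finset.sum_congr rfl fun ω _ => hterm ω
      have htnr : ∀ ω, 0 < p ω → Tendsto (fun n => t (pn n) ω) atTop (𝓝 (ρr ω)) := by
        intro ω hpos
        refine EReal.tendsto_coe.1 ?_
        rw [show ((ρr ω : ℝ) : EReal) = (M : EReal) - r ω from
          EReal.coe_toReal (hρtop ω hpos) (hρbot ω)]
        exact htn ω
      set Sf : Finset Ω := Finset.univ.filter (fun ω => 0 < p ω) with hSf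
      have hPrSf : Pr = ∑ ω ∈ Sf, p ω * ρr ω := by
        rw [hPr]
        refine (Finset.sum_subset (Finset.subset_univ _) ?_).symm
        intro ω _ hω
        have : ¬ 0 < p ω := by simpa [hSf] using hω
        have hp0 : p ω = 0 := le_antisymm (not_lt.1 this) (hps.1 ω)
        rw [hp0, zero_mul]
      have hmemSf : ∀ ω ∈ Sf, 0 < p ω := by
        intro ω hω; simpa [hSf] using hω
      have hu_t : Tendsto (fun n => ∑ ω ∈ Sf, pn n ω * t (pn n) ω) atTop (𝓝 Pr) := by
        rw [hPrSf]
        exact tendsto_finset_sum _ fun ω hω => (hpnω ω).mul (htnr ω (hmemSf ω hω))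
      have hlow : ∀ n, ∑ ω ∈ Sf, pn n ω * t (pn n) ω ≤ T (pn n) := fun n =>
        Finset.sum_le_sum_of_subset_of_nonneg (Finset.subset_univ _)
          (fun ω _ _ => mul_nonneg ((hHmem _ (hpnH n)).1.1 ω) (ht0 _ (hpnH n) ω))
      have hliminf : ((Pr : ℝ) : EReal) ≤ liminf (fun n => ((T (pn n) : ℝ) : EReal)) atTop := by
        rw [← (EReal.tendsto_coe.2 hu_t).liminf_eq]
        refine Filter.liminf_le_liminf ?_ ?_ ?_
        · exact Eventually.of_forall fun n => EReal.coe_le_coe_iff.2 (hlow n)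
        · isBoundedDefault
        · isBoundedDefault
      have hlimsup : limsup (fun n => ((T (pn n) : ℝ) : EReal)) atTop ≤ ((Pr : ℝ) : EReal) := by
        have hm : ∀ m : ℕ, limsup (fun n => ((T (pn n) : ℝ) : EReal)) atTop
            ≤ ((∑ ω, p ω * t (pn m) ω : ℝ) : EReal) := by
          intro m
          have hconv : Tendsto (fun n => ((∑ ω, pn n ω * t (pn m) ω : ℝ) : EReal)) atTop
              (𝓝 ((∑ ω, p ω * t (pn m) ω : ℝ) : EReal)) :=
            EReal.tendsto_coe.2 ((hcont (t (pn m)) p).comp hpnp)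
          calc limsup (fun n => ((T (pn n) : ℝ) : EReal)) atTop
              ≤ limsup (fun n => ((∑ ω, pn n ω * t (pn m) ω : ℝ) : EReal)) atTop := by
                refine Filter.limsup_le_limsup ?_ ?_ ?_
                · exact Eventually.of_forall fun n =>
                    EReal.coe_le_coe_iff.2 (hkey2 (pn n) (pn m) (hpnH n) (hpnH m))
                · isBoundedDefault
                · isBoundedDefault
            _ = ((∑ ω, p ω * t (pn m) ω : ℝ) : EReal) := hconv.limsup_eq
        have hm2 : Tendsto (fun m => ((∑ ω, p ω * t (pn m) ω : ℝ) : EReal)) atTop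
            (𝓝 ((Pr : ℝ) : EReal)) := by
          refine EReal.tendsto_coe.2 ?_
          have hsub : ∀ m, ∑ ω, p ω * t (pn m) ω = ∑ ω ∈ Sf, p ω * t (pn m) ω := by
            intro m
            refine (Finset.sum_subset (Finset.subset_univ _) ?_).symm
            intro ω _ hω
            have : ¬ 0 < p ω := by simpa [hSf] using hω
            have hp0 : p ω = 0 := le_antisymm (not_lt.1 this) (hps.1 ω)
            rw [hp0, zero_mul]
          have := tendsto_finset_sum (f := fun ω m => p ω * t (pn m) ω) Sf
            (fun ω hω => (htnr ω (hmemSf ω hω)).const_mul (p ω))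
          rw [← hPrSf] at this
          exact this.congr fun m => (hsub m).symm
        have h3 : limsup (fun n => ((T (pn n) : ℝ) : EReal)) atTop
            ≤ liminf (fun m => ((∑ ω, p ω * t (pn m) ω : ℝ) : EReal)) atTop :=
          Filter.le_liminf_of_le (by isBoundedDefault) (Eventually.of_forall hm)
        rwa [hm2.liminf_eq] at h3
      have htendT : Tendsto (fun n => ((T (pn n) : ℝ) : EReal)) atTop (𝓝 ((Pr : ℝ) : EReal)) := by
        refine tendsto_of_liminf_eq_limsup ?_ ?_ ?_ ?_
        · exact le_antisymm (le_trans Filter.liminf_le_limsup hlimsup) hliminf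
        · exact le_antisymm hlimsup (le_trans hliminf Filter.liminf_le_limsup)
        · isBoundedDefault
        · isBoundedDefault
      have heip : eip p r = (M : EReal) + -((Pr : ℝ) : EReal) := by
        rw [show eip p r = ∑ ω, (p ω : EReal) * r ω from rfl,
          Stmt7Aux.lemE hps.1 hps.2 hrle, hPsum]
      rw [heip]
      exact (tendsto_M_sub M htendT).congr fun n => (hGT _ (hpnH n)).symm
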